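/- Let ρ_{KE} = Σ_{k∈{0,1}} Σ_{a∈{0,1}^n} |k⟩⟨k| δ^k_{g(a)} tr_A[ρ_{AE} ∏_i A_i(a_i)] where g is the parity function, each {A_i(0), A_i(1)} is a binary projective measurement on factor A_i with C_i = A_i(0) − A_i(1), and ρ_{AE} is a state on A ⊗ E with A = ⊗_i A_i. Then ‖ρ_{KE} − u_K ⊗ ρ_E‖₁ = ‖tr_A(ρ_{AE} ∏_i C_i)‖₁, where u_K = (|0⟩⟨0| + |1⟩⟨1|)/2 and ρ_E = tr_A ρ_{AE}. -/

import Mathlib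

/-!
With the character `χ(k) = (-1)^k` of `ℤ/2`, the indicator of `g a = k` is `(1 + χ(k) ∏ᵢ χ(aᵢ))/2`,
so the sum over `a` factorises:
`∑_a [g a = k] ∏ᵢ Aᵢ(aᵢ) = (∏ᵢ (Aᵢ(0) + Aᵢ(1)) + χ(k) ∏ᵢ Cᵢ)/2 = (1 + χ(k) ∏ᵢ Cᵢ)/2`.
Taking `tr_A(ρ_AE (· ⊗ 1))` gives `ρ_KE - u_K ⊗ ρ_E = diag(1/2, -1/2) ⊗ tr_A(ρ_AE ∏ᵢ Cᵢ)`,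
and the trace norm is multiplicative under `⊗` with `‖diag(1/2, -1/2)‖₁ = 1`.
-/

open Matrix ComplexOrder

noncomputable def Matrix.PosSemidef.sqrt {n 𝕜 : Type*} [Fintype n] [DecidableEq n] [RCLike 𝕜]
    {A : Matrix n n 𝕜} (hA : A.PosSemidef) : Matrix n n 𝕜 :=
  (hA.1.eigenvectorUnitary : Matrix n n 𝕜) * diagonal ((↑) ∘ Real.sqrt ∘ hA.1.eigenvalues) *
    (star hA.1.eigenvectorUnitary : Matrix n n 𝕜)

noncomputable def traceNorm {n : Type*} [Fintype n] [DecidableEq n] (X : Matrix n n ℂ) : ℝ :=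
  ((Matrix.posSemidef_conjTranspose_mul_self X).sqrt.trace).re

noncomputable def ptraceLeft {α β : Type*} [Fintype α]
    (M : Matrix (α × β) (α × β) ℂ) : Matrix β β ℂ :=
  Matrix.of fun b b' => ∑ a, M (a, b) (a, b')

open scoped Kronecker MatrixOrder

section Parity

variable {R : Type*} [CommRing R]

variable (R) in
def parityChar : AddChar (Fin 2) R where
  toFun k := if k = 0 then 1 else -1
  map_zero_eq_one' := rfl
  map_add_eq_mul' a b := by fin_cases a <;> fin_cases b <;> simp

lemma AddChar.map_sum_eq_prod {A M ι : Type*} [AddCommMonoid A] [CommMonoid M]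
    (ψ : AddChar A M) (s : Finset ι) (a : ι → A) : ψ (∑ i ∈ s, a i) = ∏ i ∈ s, ψ (a i) :=
  map_prod ψ.toMonoidHom (fun i => Multiplicative.ofAdd (a i)) s

lemma two_mul_ite_eq_one_add_parityChar_mul (m k : Fin 2) :
    2 * (if m = k then 1 else 0 : R) = 1 + parityChar R k * parityChar R m := by
  fin_cases m <;> fin_cases k <;> simp [parityChar] <;> norm_num

lemma sum_parityChar_mul (f : Fin 2 → R) : ∑ j, parityChar R j * f j = f 0 - f 1 := by
  simp [Fin.sum_univ_two, parityChar, sub_eq_add_neg]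

lemma two_mul_sum_ite_sum_eq_mul_prod {ι : Type*} [Fintype ι] [DecidableEq ι] (k : Fin 2)
    (f : ι → Fin 2 → R) :
    2 * ∑ a : ι → Fin 2, (if ∑ i, a i = k then 1 else 0) * ∏ i, f i (a i)
      = ∏ i, (f i 0 + f i 1) + parityChar R k * ∏ i, (f i 0 - f i 1) := by
  calc 2 * ∑ a : ι → Fin 2, (if ∑ i, a i = k then 1 else 0) * ∏ i, f i (a i)
      = ∑ a : ι → Fin 2, (∏ i, f i (a i)
          + parityChar R k * ∏ i, parityChar R (a i) * f i (a i)) := by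
        rw [Finset.mul_sum]
        refine Finset.sum_congr rfl fun a _ => ?_
        rw [← mul_assoc, two_mul_ite_eq_one_add_parityChar_mul, AddChar.map_sum_eq_prod,
          Finset.prod_mul_distrib]
        ring
    _ = _ := by
        rw [Finset.sum_add_distrib, ← Finset.mul_sum, ← Fintype.prod_sum,
          ← Fintype.prod_sum fun i j => parityChar R j * f i j]
        simp only [sum_parityChar_mul, Fin.sum_univ_two (f _)]

end Parity

section PiKronecker

variable {R ι : Type*} [CommRing R] [Fintype ι] {κ : ι → Type*}

def piKronecker (B : ∀ i, Matrix (κ i) (κ i) R) : Matrix (∀ i, κ i) (∀ i, κ i) R :=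
  Matrix.of fun x y => ∏ i, B i (x i) (y i)

lemma piKronecker_one [∀ i, DecidableEq (κ i)] :
    piKronecker (fun i => (1 : Matrix (κ i) (κ i) R)) = 1 := by
  ext x y
  simp only [piKronecker, Matrix.of_apply, Matrix.one_apply, Fintype.prod_boole, funext_iff]

lemma two_smul_sum_ite_sum_smul_piKronecker [DecidableEq ι] [∀ i, DecidableEq (κ i)]
    (A : ∀ i, Fin 2 → Matrix (κ i) (κ i) R) (hsum : ∀ i, A i 0 + A i 1 = 1) (k : Fin 2) :
    (2 : R) • ∑ a : ι → Fin 2, (if ∑ i, a i = k then (1 : R) else 0) •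
        piKronecker (fun i => A i (a i))
      = 1 + parityChar R k • piKronecker (fun i => A i 0 - A i 1) := by
  rw [← piKronecker_one, ← funext hsum]
  ext x y
  simp only [piKronecker, Matrix.smul_apply, Matrix.sum_apply, Matrix.add_apply,
    Matrix.sub_apply, Matrix.of_apply, smul_eq_mul]
  exact two_mul_sum_ite_sum_eq_mul_prod k fun i j => A i j (x i) (y i)

end PiKronecker

section TraceNorm

variable {m n : Type*} [Fintype m] [DecidableEq m] [Fintype n] [DecidableEq n]

lemma Matrix.PosSemidef.sqrt_eq_cfcSqrt {A : Matrix n n ℂ} (hA : A.PosSemidef) :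
    hA.sqrt = CFC.sqrt A := by
  rw [CFC.sqrt_eq_real_sqrt A hA.nonneg, cfcₙ_eq_cfc, hA.1.cfc_eq, IsHermitian.cfc,
    Unitary.conjStarAlgAut_apply]
  rfl

lemma traceNorm_eq_re_trace_of_mul_self_eq {X S : Matrix n n ℂ} (hS : S.PosSemidef)
    (h : S * S = Xᴴ * X) : traceNorm X = S.trace.re := by
  rw [traceNorm, PosSemidef.sqrt_eq_cfcSqrt, ← CFC.sqrt_unique h hS.nonneg]

lemma traceNorm_eq_re_trace_cfcSqrt (X : Matrix n n ℂ) :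
    traceNorm X = (CFC.sqrt (Xᴴ * X)).trace.re := by
  rw [traceNorm, PosSemidef.sqrt_eq_cfcSqrt]

lemma traceNorm_kronecker (A : Matrix m m ℂ) (B : Matrix n n ℂ) :
    traceNorm (A ⊗ₖ B) = traceNorm A * traceNorm B := by
  have hP := (CFC.sqrt_nonneg (Aᴴ * A)).posSemidef
  have hQ := (CFC.sqrt_nonneg (Bᴴ * B)).posSemidef
  have hsq : (CFC.sqrt (Aᴴ * A) ⊗ₖ CFC.sqrt (Bᴴ * B)) * (CFC.sqrt (Aᴴ * A) ⊗ₖ CFC.sqrt (Bᴴ * B))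
      = (A ⊗ₖ B)ᴴ * (A ⊗ₖ B) := by
    rw [← mul_kronecker_mul, CFC.sqrt_mul_sqrt_self _ (posSemidef_conjTranspose_mul_self A).nonneg,
      CFC.sqrt_mul_sqrt_self _ (posSemidef_conjTranspose_mul_self B).nonneg,
      conjTranspose_kronecker, mul_kronecker_mul]
  have hPim := (Complex.le_def.mp hP.trace_nonneg).2
  rw [traceNorm_eq_re_trace_of_mul_self_eq (hP.kronecker hQ) hsq, trace_kronecker,
    traceNorm_eq_re_trace_cfcSqrt, traceNorm_eq_re_trace_cfcSqrt, Complex.mul_re, ← hPim]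
  simp

lemma traceNorm_diagonal (c : n → ℂ) : traceNorm (diagonal c) = ∑ i, ‖c i‖ := by
  have hS : (diagonal fun i => (‖c i‖ : ℂ)).PosSemidef :=
    posSemidef_diagonal_iff.mpr fun i => Complex.zero_le_real.mpr (norm_nonneg _)
  rw [traceNorm_eq_re_trace_of_mul_self_eq hS, trace_diagonal, Complex.re_sum]
  · simp
  · rw [diagonal_conjTranspose, diagonal_mul_diagonal, diagonal_mul_diagonal]
    congr 1
    funext i
    simp [Complex.conj_mul', sq]

end TraceNorm

section PartialTrace

variable {α β : Type*} [Fintype α] [Fintype β] [DecidableEq β]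

noncomputable def ptraceLeftMul (ρ : Matrix (α × β) (α × β) ℂ) :
    Matrix α α ℂ →ₗ[ℂ] Matrix β β ℂ where
  toFun M := ptraceLeft (ρ * (M ⊗ₖ 1))
  map_add' M N := by
    ext b b'
    simp [ptraceLeft, add_kronecker, Matrix.mul_add, Finset.sum_add_distrib]
  map_smul' c M := by
    ext b b'
    simp [ptraceLeft, smul_kronecker, Finset.mul_sum]

lemma ptraceLeftMul_one [DecidableEq α] (ρ : Matrix (α × β) (α × β) ℂ) :
    ptraceLeftMul ρ 1 = ptraceLeft ρ := by
  simp [ptraceLeftMul]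

lemma two_smul_sum_ite_sum_smul_ptraceLeftMul_piKronecker {ι : Type*} [Fintype ι] [DecidableEq ι]
    {κ : ι → Type*} [∀ i, Fintype (κ i)] [∀ i, DecidableEq (κ i)]
    (ρ : Matrix ((∀ i, κ i) × β) ((∀ i, κ i) × β) ℂ) (A : ∀ i, Fin 2 → Matrix (κ i) (κ i) ℂ)
    (hsum : ∀ i, A i 0 + A i 1 = 1) (k : Fin 2) :
    (2 : ℂ) • ∑ a : ι → Fin 2, (if ∑ i, a i = k then (1 : ℂ) else 0) •
        ptraceLeftMul ρ (piKronecker fun i => A i (a i))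
      = ptraceLeft ρ + parityChar ℂ k • ptraceLeftMul ρ (piKronecker fun i => A i 0 - A i 1) := by
  simp only [← map_smul, ← map_sum, two_smul_sum_ite_sum_smul_piKronecker A hsum, map_add,
    ptraceLeftMul_one]

end PartialTrace

lemma sum_norm_parityChar_mul_half : ∑ k, ‖parityChar ℂ k * 2⁻¹‖ = 1 := by
  simp [Fin.sum_univ_two, parityChar]
  norm_num

theorem xor_extractor_error_eq_correlator_traceNorm_general {n dE : ℕ} {d : Fin n → ℕ}
    (A : ∀ i, Fin 2 → Matrix (Fin (d i)) (Fin (d i)) ℂ)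
    (hsum : ∀ i, A i 0 + A i 1 = 1)
    (ρAE : Matrix ((∀ i, Fin (d i)) × Fin dE) ((∀ i, Fin (d i)) × Fin dE) ℂ) :
    let C : ∀ i, Matrix (Fin (d i)) (Fin (d i)) ℂ := fun i => A i 0 - A i 1
    let g : (Fin n → Fin 2) → Fin 2 := fun a => ∑ i, a i
    let MA : (Fin n → Fin 2) → Matrix (Fin dE) (Fin dE) ℂ := fun a =>
      ptraceLeft (ρAE * Matrix.of fun p q : (∀ i, Fin (d i)) × Fin dE =>
        (∏ i, A i (a i) (p.1 i) (q.1 i)) * (if p.2 = q.2 then 1 else 0))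
    let ρKE : Matrix (Fin 2 × Fin dE) (Fin 2 × Fin dE) ℂ :=
      Matrix.of fun p q => ∑ a : Fin n → Fin 2,
        (if p.1 = q.1 ∧ g a = p.1 then 1 else 0) * MA a p.2 q.2
    let ρE : Matrix (Fin dE) (Fin dE) ℂ := ptraceLeft ρAE
    let uKρE : Matrix (Fin 2 × Fin dE) (Fin 2 × Fin dE) ℂ :=
      Matrix.of fun p q => (if p.1 = q.1 then (2 : ℂ)⁻¹ else 0) * ρE p.2 q.2
    traceNorm (ρKE - uKρE) =
      traceNorm (ptraceLeft (ρAE * Matrix.of fun p q : (∀ i, Fin (d i)) × Fin dE =>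
        (∏ i, C i (p.1 i) (q.1 i)) * (if p.2 = q.2 then 1 else 0))) := by
  intro C g MA ρKE ρE uKρE
  set T := ptraceLeftMul ρAE (piKronecker C)
  have hdiff : ρKE - uKρE = diagonal (fun k => parityChar ℂ k * 2⁻¹) ⊗ₖ T := by
    ext ⟨k, b⟩ ⟨k', b'⟩
    rcases eq_or_ne k k' with rfl | hk
    · have hsumk :
          (2 : ℂ) • ∑ a, (if g a = k then (1 : ℂ) else 0) • MA a = ρE + parityChar ℂ k • T :=
        two_smul_sum_ite_sum_smul_ptraceLeftMul_piKronecker ρAE A hsum k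
      replace hsumk := congrFun₂ hsumk b b'
      simp only [Matrix.smul_apply, Matrix.sum_apply, Matrix.add_apply, smul_eq_mul] at hsumk
      simp only [ρKE, uKρE, Matrix.sub_apply, Matrix.of_apply, kroneckerMap_apply,
        diagonal_apply_eq, true_and, if_true]
      linear_combination hsumk / 2
    · simp [ρKE, uKρE, hk]
  change traceNorm (ρKE - uKρE) = traceNorm T
  rw [hdiff, traceNorm_kronecker, traceNorm_diagonal, sum_norm_parityChar_mul_half, one_mul]

/-- The extractor error of the XOR (parity) function equals the trace norm of the
correlator term `tr_A (ρ_{AE} ∏ᵢ Cᵢ)`. -/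
theorem xor_extractor_error_eq_correlator_traceNorm {n dE : ℕ} {d : Fin n → ℕ}
    (A : ∀ i, Fin 2 → Matrix (Fin (d i)) (Fin (d i)) ℂ)
    (hproj : ∀ i a, (A i a).IsHermitian ∧ A i a * A i a = A i a)
    (hsum : ∀ i, A i 0 + A i 1 = 1)
    (ρAE : Matrix ((∀ i, Fin (d i)) × Fin dE) ((∀ i, Fin (d i)) × Fin dE) ℂ)
    (hρ : ρAE.PosSemidef) (htr : ρAE.trace = 1) :
    let C : ∀ i, Matrix (Fin (d i)) (Fin (d i)) ℂ := fun i => A i 0 - A i 1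
    let g : (Fin n → Fin 2) → Fin 2 := fun a => ∑ i, a i
    let MA : (Fin n → Fin 2) → Matrix (Fin dE) (Fin dE) ℂ := fun a =>
      ptraceLeft (ρAE * Matrix.of fun p q : (∀ i, Fin (d i)) × Fin dE =>
        (∏ i, A i (a i) (p.1 i) (q.1 i)) * (if p.2 = q.2 then 1 else 0))
    let ρKE : Matrix (Fin 2 × Fin dE) (Fin 2 × Fin dE) ℂ :=
      Matrix.of fun p q => ∑ a : Fin n → Fin 2,
        (if p.1 = q.1 ∧ g a = p.1 then 1 else 0) * MA a p.2 q.2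
    let ρE : Matrix (Fin dE) (Fin dE) ℂ := ptraceLeft ρAE
    let uKρE : Matrix (Fin 2 × Fin dE) (Fin 2 × Fin dE) ℂ :=
      Matrix.of fun p q => (if p.1 = q.1 then (2 : ℂ)⁻¹ else 0) * ρE p.2 q.2
    traceNorm (ρKE - uKρE) =
      traceNorm (ptraceLeft (ρAE * Matrix.of fun p q : (∀ i, Fin (d i)) × Fin dE =>
        (∏ i, C i (p.1 i) (q.1 i)) * (if p.2 = q.2 then 1 else 0))) :=
  xor_extractor_error_eq_correlator_traceNorm_general A hsum ρAE
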